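/- Let V be a (2n+1)-dimensional real vector space with α, H = ker α, Z, and symplectic form ω on H as above, and let η₁,…,η_r ∈ V* be linearly independent covectors (not necessarily annihilating Z). Write η̂ᵢ = ηᵢ − ηᵢ(Z)α and set xᵢ = fᵢ Z + (the ω-dual of η̂ᵢ|_H) for arbitrary scalars fᵢ. Then the dimension of span{x₁,…,x_r} is at least r−1, and the dimension of span{Z, x₁,…,x_r} is at least r. -/
import Mathlib


/-- Lemma 3.4(ii), general case: with `V`, `α`, `H = ker α`, `Z`, `ω` as in the
contact linear algebra setup, let `η₁, …, η_r` be linearly independent covectors,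
`η̂ᵢ = ηᵢ − ηᵢ(Z)·α`, `wᵢ ∈ H` the symplectic dual of `η̂ᵢ|_H`
(`ω(wᵢ, w) = −η̂ᵢ(w)` for `w ∈ H`), and `xᵢ = fᵢ•Z + wᵢ` for arbitrary scalars
`fᵢ`.  Then `dim span{x₁,…,x_r} ≥ r − 1` and `dim span{Z, x₁,…,x_r} ≥ r`. -/
theorem stmt18 {n r : ℕ} {V : Type*} [AddCommGroup V] [Module ℝ V]
    [FiniteDimensional ℝ V] (hdim : Module.finrank ℝ V = 2 * n + 1)
    (α : V →ₗ[ℝ] ℝ) (hα : α ≠ 0) (Z : V) (hZ : α Z = 1)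
    (ω : V →ₗ[ℝ] V →ₗ[ℝ] ℝ)
    (hskew : ∀ u v, ω u v = - ω v u)
    (hZω : ∀ v, ω Z v = 0)
    (hnd : ∀ u ∈ LinearMap.ker α, (∀ w' ∈ LinearMap.ker α, ω u w' = 0) → u = 0)
    (η : Fin r → (V →ₗ[ℝ] ℝ)) (hη : LinearIndependent ℝ η)
    (w : Fin r → V) (hw : ∀ i, w i ∈ LinearMap.ker α)
    (hwdual : ∀ i, ∀ u ∈ LinearMap.ker α, ω (w i) u = - (η i u - η i Z * α u))
    (f : Fin r → ℝ)
    (x : Fin r → V) (hx : ∀ i, x i = f i • Z + w i) :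
    r - 1 ≤ Module.finrank ℝ (Submodule.span ℝ (Set.range x)) ∧
    r ≤ Module.finrank ℝ (Submodule.span ℝ (Set.range (Fin.cons Z x : Fin (r + 1) → V))) := by
  classical
  -- pointwise computation of ω (x i)
  have key : ∀ i v, ω (x i) v = η i Z * α v - η i v := by
    intro i v
    have hu : v - α v • Z ∈ LinearMap.ker α := by
      simp [LinearMap.mem_ker, hZ]
    have h1 : ω (w i) (v - α v • Z) = -(η i (v - α v • Z) - η i Z * α (v - α v • Z)) :=
      hwdual i _ hu
    have hZw : ω (w i) Z = 0 := by rw [hskew]; simp [hZω]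
    have hxw : ω (x i) v = ω (w i) v := by
      rw [hx i]; simp [hZω]
    have hsplit : ω (w i) v = ω (w i) (v - α v • Z) + α v * ω (w i) Z := by
      have : (v - α v • Z) + α v • Z = v := by abel
      calc ω (w i) v = ω (w i) ((v - α v • Z) + α v • Z) := by rw [this]
        _ = ω (w i) (v - α v • Z) + α v * ω (w i) Z := by
            simp [map_add, map_smul, mul_comm]
    rw [hxw, hsplit, h1, hZw]
    simp only [map_sub, map_smul, smul_eq_mul, hZ]
    ring
  have hμ : ∀ i, (ω (x i) : V →ₗ[ℝ] ℝ) = η i Z • α - η i := by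
    intro i; ext v; simp [key i v]
  have hr : Module.finrank ℝ (Submodule.span ℝ (Set.range η)) = r := by
    rw [finrank_span_eq_card hη]; simp
  constructor
  · -- part 1
    set p : Submodule ℝ (V →ₗ[ℝ] ℝ) := Submodule.span ℝ {α} with hp
    set q : Submodule ℝ (V →ₗ[ℝ] ℝ) := Submodule.span ℝ (Set.range fun i => ω (x i)) with hq
    have hle1 : Submodule.span ℝ (Set.range η) ≤ p ⊔ q := by
      rw [Submodule.span_le]
      rintro _ ⟨i, rfl⟩
      have hrepr : η i = η i Z • α - ω (x i) := by rw [hμ i]; abel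
      rw [hrepr]
      exact Submodule.sub_mem _
        (Submodule.mem_sup_left (Submodule.smul_mem _ _ (Submodule.mem_span_singleton_self α)))
        (Submodule.mem_sup_right (Submodule.subset_span ⟨i, rfl⟩))
    have h1 : Module.finrank ℝ p = 1 := finrank_span_singleton hα
    have hsup : Module.finrank ℝ ↥(p ⊔ q) ≤ 1 + Module.finrank ℝ q := by
      have := Submodule.finrank_sup_add_finrank_inf_eq p q
      omega
    have hmono := Submodule.finrank_mono hle1
    have hmap : Module.finrank ℝ q ≤ Module.finrank ℝ (Submodule.span ℝ (Set.range x)) := by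
      have heq : q = (Submodule.span ℝ (Set.range x)).map ω := by
        rw [hq, Submodule.map_span, ← Set.range_comp]; rfl
      rw [heq]
      exact Submodule.finrank_map_le ω _
    omega
  · -- part 2
    set K : V →ₗ[ℝ] (V →ₗ[ℝ] ℝ) := ω + α.smulRight α with hK
    have hKZ : K Z = α := by
      ext v; simp [hK, hZω, hZ]
    have hαx : ∀ i, α (x i) = f i := by
      intro i; rw [hx i]
      have := hw i
      rw [LinearMap.mem_ker] at this
      simp [hZ, this]
    have hKx : ∀ i, K (x i) = (η i Z + f i) • α - η i := by
      intro i; ext v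
      simp [hK, hμ i, hαx i]
      ring
    have hle2 : Submodule.span ℝ (Set.range η) ≤
        Submodule.span ℝ (Set.range (K ∘ (Fin.cons Z x : Fin (r + 1) → V))) := by
      rw [Submodule.span_le]
      rintro _ ⟨i, rfl⟩
      have hrepr : η i = (η i Z + f i) • K Z - K (x i) := by
        rw [hKZ, hKx i]; abel
      rw [hrepr]
      refine Submodule.sub_mem _
        (Submodule.smul_mem _ _ (Submodule.subset_span ⟨0, by simp⟩))
        (Submodule.subset_span ⟨i.succ, by simp⟩)
    have hmono2 := Submodule.finrank_mono hle2
    have hmap2 : Module.finrank ℝ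
        (Submodule.span ℝ (Set.range (K ∘ (Fin.cons Z x : Fin (r + 1) → V))))
        ≤ Module.finrank ℝ (Submodule.span ℝ (Set.range (Fin.cons Z x : Fin (r + 1) → V))) := by
      have heq : Submodule.span ℝ (Set.range (K ∘ (Fin.cons Z x : Fin (r + 1) → V))) =
          (Submodule.span ℝ (Set.range (Fin.cons Z x : Fin (r + 1) → V))).map K := by
        rw [Submodule.map_span, ← Set.range_comp]
      rw [heq]
      exact Submodule.finrank_map_le K _
    omega
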